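/- Let n ≥ 2 be an integer and λ, σ, s ∈ ℂ. For every smooth u : B → ℂ on the open unit ball B ⊂ ℝ^{n−1}, the identity P_σ((1−|Y|²)^s·log(1−|Y|²)·u) = log(1−|Y|²)·(1−|Y|²)^s·[ 4s(s−σ)(1−|Y|²)^{−1}u + P_{σ−2s}u ] + (1−|Y|²)^s·[ 4(2s−σ)(1−|Y|²)^{−1}u − 4(Eu + (2s − σ + (n−1)/2)u) ] holds at every point of B, where Eu(Y) = Σⱼ Yⱼ ∂ⱼu(Y). -/

import Mathlib

/-!
Since `P_σ = Δ − E² − (n−1−2σ)E + σ(n−1−σ) − λ`, the Leibniz rules give, for a radial factor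
`g = φ(|Y|²)`, `P_σ(g u) = g P_σ u + (Δg − E²g − (n−1−2σ)Eg) u − 2 Eg Eu + 2 ∇g·∇u`, where
`Eg`, `E²g`, `Δg` and `∇g·∇u = 2φ' Eu` only involve `φ'` and `φ''` at `|Y|²`. For
`φ(t) = (1−t)^s log(1−t)` the terms carrying `log(1−|Y|²)` combine with `g P_σ u` into
`log(1−|Y|²)(1−|Y|²)^s P_{σ−2s} u`, because `P_{σ−2s}` differs from `P_σ` by `−4sE` plus a
constant; the log-free terms are the two error terms.
-/

/-- `∂ⱼ` on functions on `ℝ^m`. -/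
noncomputable def pd {m : ℕ} (j : Fin m) (u : (Fin m → ℝ) → ℂ) (Y : Fin m → ℝ) : ℂ :=
  fderiv ℝ u Y (Pi.single j 1)

/-- The Euler vector field `E u (Y) = Σⱼ Yⱼ ∂ⱼ u (Y)`. -/
noncomputable def euler {m : ℕ} (u : (Fin m → ℝ) → ℂ) (Y : Fin m → ℝ) : ℂ :=
  ∑ j, (Y j : ℂ) * pd j u Y

/-- The Euclidean Laplacian `Δ u = Σⱼ ∂ⱼ² u`. -/
noncomputable def lap {m : ℕ} (u : (Fin m → ℝ) → ℂ) (Y : Fin m → ℝ) : ℂ :=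
  ∑ j, pd j (pd j u) Y

/-- The normal operator family `P_σ u = −(E + (n−1−σ))((E − σ)u) + Δ_Y u − λ u`
acting on functions on `ℝ^{n−1}` (the real form of
`(YD_Y − i(n−1−σ))(YD_Y + iσ) − Δ_Y − λ`). -/
noncomputable def Pop (n : ℕ) (lam σ : ℂ) (u : (Fin (n - 1) → ℝ) → ℂ)
    (Y : Fin (n - 1) → ℝ) : ℂ :=
  -(euler (fun Z => euler u Z - σ * u Z) Y
      + ((n : ℂ) - 1 - σ) * (euler u Y - σ * u Y))
    + lap u Y - lam * u Y

open Filter Topology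

section ProductRules

variable {m : ℕ} {f g : (Fin m → ℝ) → ℂ} {Y : Fin m → ℝ}

theorem pd_eq_of_hasFDerivAt {f' : (Fin m → ℝ) →L[ℝ] ℂ} (h : HasFDerivAt f f' Y) (j : Fin m) :
    pd j f Y = f' (Pi.single j 1) := by
  rw [pd, h.fderiv]

theorem Filter.EventuallyEq.pd_eq (h : f =ᶠ[𝓝 Y] g) (j : Fin m) : pd j f Y = pd j g Y := by
  rw [pd, pd, h.fderiv_eq]

theorem Filter.EventuallyEq.euler_eq (h : f =ᶠ[𝓝 Y] g) : euler f Y = euler g Y := by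
  simp only [euler, h.pd_eq]

theorem pd_add (hf : DifferentiableAt ℝ f Y) (hg : DifferentiableAt ℝ g Y) (j : Fin m) :
    pd j (fun Z => f Z + g Z) Y = pd j f Y + pd j g Y := by
  simp [pd, fderiv_fun_add hf hg]

theorem pd_sub (hf : DifferentiableAt ℝ f Y) (hg : DifferentiableAt ℝ g Y) (j : Fin m) :
    pd j (fun Z => f Z - g Z) Y = pd j f Y - pd j g Y := by
  simp [pd, fderiv_fun_sub hf hg]

theorem pd_const_mul (c : ℂ) (hf : DifferentiableAt ℝ f Y) (j : Fin m) :
    pd j (fun Z => c * f Z) Y = c * pd j f Y := by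
  simp [pd, fderiv_const_mul hf c]

theorem pd_mul (hf : DifferentiableAt ℝ f Y) (hg : DifferentiableAt ℝ g Y) (j : Fin m) :
    pd j (fun Z => f Z * g Z) Y = pd j f Y * g Y + f Y * pd j g Y := by
  simp only [pd, fderiv_fun_mul hf hg, add_apply,
    smul_apply, smul_eq_mul]
  ring

theorem pd_ofReal_apply_self (j : Fin m) : pd j (fun Z : Fin m → ℝ => (Z j : ℂ)) Y = 1 := by
  have h : HasFDerivAt (fun Z : Fin m → ℝ => (Z j : ℂ))
      (Complex.ofRealCLM.comp (ContinuousLinearMap.proj j)) Y :=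
    Complex.ofRealCLM.hasFDerivAt.comp Y (hasFDerivAt_apply j Y)
  simp [pd_eq_of_hasFDerivAt h]

theorem ContDiffAt.differentiableAt_pd {k : WithTop ℕ∞} (hf : ContDiffAt ℝ k f Y) (hk : 1 + 1 ≤ k)
    (j : Fin m) : DifferentiableAt ℝ (pd j f) Y :=
  ((hf.fderiv_right hk).differentiableAt one_ne_zero).clm_apply (differentiableAt_const _)

theorem euler_add (hf : DifferentiableAt ℝ f Y) (hg : DifferentiableAt ℝ g Y) :
    euler (fun Z => f Z + g Z) Y = euler f Y + euler g Y := by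
  simp only [euler, pd_add hf hg, mul_add, Finset.sum_add_distrib]

theorem euler_sub (hf : DifferentiableAt ℝ f Y) (hg : DifferentiableAt ℝ g Y) :
    euler (fun Z => f Z - g Z) Y = euler f Y - euler g Y := by
  simp only [euler, pd_sub hf hg, mul_sub, Finset.sum_sub_distrib]

theorem euler_const_mul (c : ℂ) (hf : DifferentiableAt ℝ f Y) :
    euler (fun Z => c * f Z) Y = c * euler f Y := by
  simp only [euler, pd_const_mul c hf, Finset.mul_sum]
  exact Finset.sum_congr rfl fun _ _ => mul_left_comm _ _ _

theorem euler_mul (hf : DifferentiableAt ℝ f Y) (hg : DifferentiableAt ℝ g Y) :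
    euler (fun Z => f Z * g Z) Y = euler f Y * g Y + f Y * euler g Y := by
  simp only [euler, pd_mul hf hg, Finset.sum_mul, Finset.mul_sum, ← Finset.sum_add_distrib]
  exact Finset.sum_congr rfl fun _ _ => by ring

theorem differentiableAt_euler (hf' : ∀ j, DifferentiableAt ℝ (pd j f) Y) :
    DifferentiableAt ℝ (euler f) Y :=
  DifferentiableAt.fun_sum fun j _ =>
    (by fun_prop : DifferentiableAt ℝ (fun Z : Fin m → ℝ => (Z j : ℂ)) Y).mul (hf' j)

theorem eventuallyEq_euler_mul (hf : ∀ᶠ Z in 𝓝 Y, DifferentiableAt ℝ f Z)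
    (hg : ∀ᶠ Z in 𝓝 Y, DifferentiableAt ℝ g Z) :
    euler (fun Z => f Z * g Z) =ᶠ[𝓝 Y] fun Z => euler f Z * g Z + f Z * euler g Z :=
  (hf.and hg).mono fun _ h => euler_mul h.1 h.2

theorem euler_euler_mul (hf : ∀ᶠ Z in 𝓝 Y, DifferentiableAt ℝ f Z)
    (hg : ∀ᶠ Z in 𝓝 Y, DifferentiableAt ℝ g Z) (hf' : ∀ j, DifferentiableAt ℝ (pd j f) Y)
    (hg' : ∀ j, DifferentiableAt ℝ (pd j g) Y) :
    euler (euler fun Z => f Z * g Z) Y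
      = euler (euler f) Y * g Y + 2 * euler f Y * euler g Y + f Y * euler (euler g) Y := by
  have hEf := differentiableAt_euler hf'
  have hEg := differentiableAt_euler hg'
  rw [(eventuallyEq_euler_mul hf hg).euler_eq,
    euler_add (hEf.fun_mul hg.self_of_nhds) (hf.self_of_nhds.fun_mul hEg),
    euler_mul hEf hg.self_of_nhds, euler_mul hf.self_of_nhds hEg]
  ring

theorem lap_mul (hf : ∀ᶠ Z in 𝓝 Y, DifferentiableAt ℝ f Z)
    (hg : ∀ᶠ Z in 𝓝 Y, DifferentiableAt ℝ g Z) (hf' : ∀ j, DifferentiableAt ℝ (pd j f) Y)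
    (hg' : ∀ j, DifferentiableAt ℝ (pd j g) Y) :
    lap (fun Z => f Z * g Z) Y
      = lap f Y * g Y + 2 * ∑ j, pd j f Y * pd j g Y + f Y * lap g Y := by
  have hpd (j : Fin m) :
      pd j (fun Z => f Z * g Z) =ᶠ[𝓝 Y] fun Z => pd j f Z * g Z + f Z * pd j g Z :=
    (hf.and hg).mono fun _ h => pd_mul h.1 h.2 j
  have hf₀ := hf.self_of_nhds
  have hg₀ := hg.self_of_nhds
  simp only [lap, Finset.sum_mul, Finset.mul_sum, ← Finset.sum_add_distrib]
  refine Finset.sum_congr rfl fun j _ => ?_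
  rw [(hpd j).pd_eq, pd_add ((hf' j).fun_mul hg₀) (hf₀.fun_mul (hg' j)), pd_mul (hf' j) hg₀,
    pd_mul hf₀ (hg' j)]
  ring

end ProductRules

section RadialFunctions

variable {m : ℕ} {φ φ' : ℝ → ℂ} {c : ℂ} {Y : Fin m → ℝ}

theorem hasFDerivAt_sum_sq (Y : Fin m → ℝ) :
    HasFDerivAt (fun Z : Fin m → ℝ => ∑ i, Z i ^ 2)
      (∑ i, (2 * Y i) • ContinuousLinearMap.proj (R := ℝ) (φ := fun _ : Fin m => ℝ) i) Y :=
  HasFDerivAt.fun_sum fun i _ => by simpa using (hasFDerivAt_apply (𝕜 := ℝ) i Y).pow 2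

theorem hasFDerivAt_comp_sum_sq (hφ : HasDerivAt φ c (∑ i, Y i ^ 2)) :
    HasFDerivAt (fun Z : Fin m → ℝ => φ (∑ i, Z i ^ 2))
      ((ContinuousLinearMap.smulRight (1 : ℝ →L[ℝ] ℝ) c).comp
        (∑ i, (2 * Y i) • ContinuousLinearMap.proj (R := ℝ) (φ := fun _ : Fin m => ℝ) i)) Y :=
  hφ.hasFDerivAt.comp Y (hasFDerivAt_sum_sq Y)

theorem pd_comp_sum_sq (hφ : HasDerivAt φ c (∑ i, Y i ^ 2)) (j : Fin m) :
    pd j (fun Z => φ (∑ i, Z i ^ 2)) Y = 2 * Y j * c := by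
  simp [pd_eq_of_hasFDerivAt (hasFDerivAt_comp_sum_sq hφ), Pi.single_apply, Complex.real_smul]

theorem euler_comp_sum_sq (hφ : HasDerivAt φ c (∑ i, Y i ^ 2)) :
    euler (fun Z => φ (∑ i, Z i ^ 2)) Y = 2 * ((∑ i, Y i ^ 2 : ℝ) : ℂ) * c := by
  simp only [euler, pd_comp_sum_sq hφ]
  push_cast
  rw [Finset.mul_sum, Finset.sum_mul]
  exact Finset.sum_congr rfl fun _ _ => by ring

theorem eventually_hasDerivAt_comp_sum_sq
    (hφ : ∀ᶠ t in 𝓝 (∑ i, Y i ^ 2), HasDerivAt φ (φ' t) t) :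
    ∀ᶠ Z in 𝓝 Y, HasDerivAt φ (φ' (∑ i, Z i ^ 2)) (∑ i, Z i ^ 2) :=
  ((by fun_prop : Continuous fun Z : Fin m → ℝ => ∑ i, Z i ^ 2).tendsto Y).eventually hφ

theorem eventually_differentiableAt_comp_sum_sq
    (hφ : ∀ᶠ t in 𝓝 (∑ i, Y i ^ 2), HasDerivAt φ (φ' t) t) :
    ∀ᶠ Z in 𝓝 Y, DifferentiableAt ℝ (fun Z : Fin m → ℝ => φ (∑ i, Z i ^ 2)) Z :=
  (eventually_hasDerivAt_comp_sum_sq hφ).mono fun _ h =>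
    (hasFDerivAt_comp_sum_sq h).differentiableAt

theorem eventuallyEq_pd_comp_sum_sq (hφ : ∀ᶠ t in 𝓝 (∑ i, Y i ^ 2), HasDerivAt φ (φ' t) t)
    (j : Fin m) :
    pd j (fun Z => φ (∑ i, Z i ^ 2)) =ᶠ[𝓝 Y] fun Z => 2 * (Z j : ℂ) * φ' (∑ i, Z i ^ 2) :=
  (eventually_hasDerivAt_comp_sum_sq hφ).mono fun _ h => pd_comp_sum_sq h j

theorem differentiableAt_pd_comp_sum_sq (hφ : ∀ᶠ t in 𝓝 (∑ i, Y i ^ 2), HasDerivAt φ (φ' t) t)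
    (hφ' : HasDerivAt φ' c (∑ i, Y i ^ 2)) (j : Fin m) :
    DifferentiableAt ℝ (pd j fun Z => φ (∑ i, Z i ^ 2)) Y := by
  refine DifferentiableAt.congr_of_eventuallyEq ?_ (eventuallyEq_pd_comp_sum_sq hφ j)
  exact (by fun_prop : DifferentiableAt ℝ (fun Z : Fin m → ℝ => 2 * (Z j : ℂ)) Y).fun_mul
    (hasFDerivAt_comp_sum_sq hφ').differentiableAt

theorem euler_euler_comp_sum_sq (hφ : ∀ᶠ t in 𝓝 (∑ i, Y i ^ 2), HasDerivAt φ (φ' t) t)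
    (hφ' : HasDerivAt φ' c (∑ i, Y i ^ 2)) :
    euler (euler fun Z => φ (∑ i, Z i ^ 2)) Y
      = 4 * ((∑ i, Y i ^ 2 : ℝ) : ℂ) * φ' (∑ i, Y i ^ 2)
        + 4 * ((∑ i, Y i ^ 2 : ℝ) : ℂ) ^ 2 * c := by
  have hE : euler (fun Z => φ (∑ i, Z i ^ 2)) =ᶠ[𝓝 Y]
      fun Z => (fun t : ℝ => 2 * (t : ℂ) * φ' t) (∑ i, Z i ^ 2) :=
    (eventually_hasDerivAt_comp_sum_sq hφ).mono fun _ h => euler_comp_sum_sq h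
  have hψ : HasDerivAt (fun t : ℝ => 2 * (t : ℂ) * φ' t)
      (2 * φ' (∑ i, Y i ^ 2) + 2 * ((∑ i, Y i ^ 2 : ℝ) : ℂ) * c) (∑ i, Y i ^ 2) := by
    simpa using (((hasDerivAt_id _).ofReal_comp).const_mul (2 : ℂ)).fun_mul hφ'
  rw [hE.euler_eq, euler_comp_sum_sq hψ]
  ring

theorem lap_comp_sum_sq (hφ : ∀ᶠ t in 𝓝 (∑ i, Y i ^ 2), HasDerivAt φ (φ' t) t)
    (hφ' : HasDerivAt φ' c (∑ i, Y i ^ 2)) :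
    lap (fun Z => φ (∑ i, Z i ^ 2)) Y
      = 2 * m * φ' (∑ i, Y i ^ 2) + 4 * ((∑ i, Y i ^ 2 : ℝ) : ℂ) * c := by
  have hterm (j : Fin m) : pd j (pd j fun Z => φ (∑ i, Z i ^ 2)) Y
      = 2 * φ' (∑ i, Y i ^ 2) + 4 * (Y j : ℂ) ^ 2 * c := by
    have hcoord : DifferentiableAt ℝ (fun Z : Fin m → ℝ => (Z j : ℂ)) Y := by fun_prop
    rw [(eventuallyEq_pd_comp_sum_sq hφ j).pd_eq, pd_mul (hcoord.const_mul 2)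
      (hasFDerivAt_comp_sum_sq hφ').differentiableAt, pd_const_mul 2 hcoord,
      pd_ofReal_apply_self, pd_comp_sum_sq hφ']
    ring
  simp only [lap, hterm, Finset.sum_add_distrib, ← Finset.mul_sum, ← Finset.sum_mul,
    Finset.sum_const, Finset.card_univ, Fintype.card_fin, nsmul_eq_mul]
  push_cast
  ring

end RadialFunctions

section NormalOperator

variable {n : ℕ} {f g : (Fin (n - 1) → ℝ) → ℂ} {Y : Fin (n - 1) → ℝ}

theorem Pop_eq_of_differentiableAt (lam σ : ℂ) (hf : DifferentiableAt ℝ f Y)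
    (hEf : DifferentiableAt ℝ (euler f) Y) :
    Pop n lam σ f Y = -(euler (euler f) Y + ((n : ℂ) - 1 - 2 * σ) * euler f Y
      - σ * ((n : ℂ) - 1 - σ) * f Y) + lap f Y - lam * f Y := by
  rw [Pop, euler_sub hEf (hf.const_mul σ), euler_const_mul σ hf]
  ring

theorem Pop_mul (lam σ : ℂ) (hf : ∀ᶠ Z in 𝓝 Y, DifferentiableAt ℝ f Z)
    (hg : ∀ᶠ Z in 𝓝 Y, DifferentiableAt ℝ g Z) (hf' : ∀ j, DifferentiableAt ℝ (pd j f) Y)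
    (hg' : ∀ j, DifferentiableAt ℝ (pd j g) Y) :
    Pop n lam σ (fun Z => f Z * g Z) Y
      = f Y * Pop n lam σ g Y
        + (lap f Y - euler (euler f) Y - ((n : ℂ) - 1 - 2 * σ) * euler f Y) * g Y
        - 2 * euler f Y * euler g Y + 2 * ∑ j, pd j f Y * pd j g Y := by
  have hf₀ := hf.self_of_nhds
  have hg₀ := hg.self_of_nhds
  have hEf := differentiableAt_euler hf'
  have hEg := differentiableAt_euler hg'
  have hEfg : DifferentiableAt ℝ (euler fun Z => f Z * g Z) Y :=
    ((hEf.fun_mul hg₀).fun_add (hf₀.fun_mul hEg)).congr_of_eventuallyEq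
      (eventuallyEq_euler_mul hf hg)
  rw [Pop_eq_of_differentiableAt lam σ (hf₀.fun_mul hg₀) hEfg,
    Pop_eq_of_differentiableAt lam σ hg₀ hEg, euler_euler_mul hf hg hf' hg',
    euler_mul hf₀ hg₀, lap_mul hf hg hf' hg']
  ring

theorem Pop_comp_sum_sq_mul {φ φ' : ℝ → ℂ} {c : ℂ} {u : (Fin (n - 1) → ℝ) → ℂ} (lam σ : ℂ)
    (hφ : ∀ᶠ t in 𝓝 (∑ i, Y i ^ 2), HasDerivAt φ (φ' t) t)
    (hφ' : HasDerivAt φ' c (∑ i, Y i ^ 2))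
    (hu : ∀ᶠ Z in 𝓝 Y, DifferentiableAt ℝ u Z) (hu' : ∀ j, DifferentiableAt ℝ (pd j u) Y) :
    Pop n lam σ (fun Z => φ (∑ i, Z i ^ 2) * u Z) Y
      = φ (∑ i, Y i ^ 2) * Pop n lam σ u Y
        + (2 * ((n - 1 : ℕ) : ℂ) * φ' (∑ i, Y i ^ 2)
            + 4 * ((∑ i, Y i ^ 2 : ℝ) : ℂ) * (1 - ((∑ i, Y i ^ 2 : ℝ) : ℂ)) * c
            - 2 * ((n : ℂ) + 1 - 2 * σ) * ((∑ i, Y i ^ 2 : ℝ) : ℂ) * φ' (∑ i, Y i ^ 2)) * u Y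
        + 4 * (1 - ((∑ i, Y i ^ 2 : ℝ) : ℂ)) * φ' (∑ i, Y i ^ 2) * euler u Y := by
  have hcross : ∑ j, pd j (fun Z => φ (∑ i, Z i ^ 2)) Y * pd j u Y
      = 2 * φ' (∑ i, Y i ^ 2) * euler u Y := by
    simp only [pd_comp_sum_sq hφ.self_of_nhds, euler, Finset.mul_sum]
    exact Finset.sum_congr rfl fun _ _ => by ring
  rw [Pop_mul lam σ (eventually_differentiableAt_comp_sum_sq hφ) hu
    (differentiableAt_pd_comp_sum_sq hφ hφ') hu', lap_comp_sum_sq hφ hφ',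
    euler_euler_comp_sum_sq hφ hφ', euler_comp_sum_sq hφ.self_of_nhds, hcross]
  ring

end NormalOperator

theorem hasDerivAt_ofReal_cpow_mul_log (a b d : ℂ) {x : ℝ} (hx : 0 < x) :
    HasDerivAt (fun y : ℝ => (y : ℂ) ^ a * (b * Real.log y + d))
      ((x : ℂ) ^ (a - 1) * (a * b * Real.log x + a * d + b)) x := by
  have hpow : HasDerivAt (fun y : ℝ => (y : ℂ) ^ a) (a * (x : ℂ) ^ (a - 1)) x := by
    simpa using ((hasDerivAt_id (x : ℂ)).cpow_const (c := a) (by simp [hx])).comp_ofReal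
  have hlog : HasDerivAt (fun y : ℝ => (Real.log y : ℂ)) (x : ℂ)⁻¹ x := by
    simpa using (Real.hasDerivAt_log hx.ne').ofReal_comp
  have hx' : (x : ℂ) ≠ 0 := by exact_mod_cast hx.ne'
  refine (hpow.fun_mul ((hlog.const_mul b).add_const d)).congr_deriv ?_
  rw [Complex.cpow_sub _ _ hx', Complex.cpow_one]
  field_simp

theorem hasDerivAt_ofReal_one_sub_cpow_mul_log (a b d : ℂ) {t : ℝ} (ht : t < 1) :
    HasDerivAt (fun y : ℝ => ((1 - y : ℝ) : ℂ) ^ a * (b * Real.log (1 - y) + d))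
      (-(((1 - t : ℝ) : ℂ) ^ (a - 1) * (a * b * Real.log (1 - t) + a * d + b))) t := by
  simpa [Function.comp_def] using
    (hasDerivAt_ofReal_cpow_mul_log a b d (sub_pos.2 ht)).scomp t ((hasDerivAt_id t).const_sub 1)

/-- the `k = 1` logarithmic conjugation identity on the open unit ball:
`P_σ((1−|Y|²)^s log(1−|Y|²) u)
  = log(1−|Y|²)·(1−|Y|²)^s·[4s(s−σ)(1−|Y|²)^{−1}u + P_{σ−2s}u]
    + (1−|Y|²)^s·[4(2s−σ)(1−|Y|²)^{−1}u − 4(Eu + (2s−σ+(n−1)/2)u)]`. -/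
theorem stmt13 (n : ℕ) (hn : 2 ≤ n) (lam σ s : ℂ)
    (u : (Fin (n - 1) → ℝ) → ℂ)
    (hu : ContDiffOn ℝ (⊤ : ℕ∞) u {Y : Fin (n - 1) → ℝ | ∑ j, (Y j) ^ 2 < 1}) :
    ∀ Y ∈ {Y : Fin (n - 1) → ℝ | ∑ j, (Y j) ^ 2 < 1},
      Pop n lam σ
          (fun Z => (((1 - ∑ j, (Z j) ^ 2 : ℝ)) : ℂ) ^ s *
            (Real.log (1 - ∑ j, (Z j) ^ 2) : ℂ) * u Z) Y
        = (Real.log (1 - ∑ j, (Y j) ^ 2) : ℂ) *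
            ((((1 - ∑ j, (Y j) ^ 2 : ℝ)) : ℂ) ^ s *
              (4 * s * (s - σ) * (((1 - ∑ j, (Y j) ^ 2 : ℝ)) : ℂ)⁻¹ * u Y
                + Pop n lam (σ - 2 * s) u Y))
          + (((1 - ∑ j, (Y j) ^ 2 : ℝ)) : ℂ) ^ s *
              (4 * (2 * s - σ) * (((1 - ∑ j, (Y j) ^ 2 : ℝ)) : ℂ)⁻¹ * u Y
                - 4 * (euler u Y + (2 * s - σ + ((n : ℂ) - 1) / 2) * u Y)) := by
  intro Y hY
  have hY₁ : ∑ i, Y i ^ 2 < 1 := hY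
  have hball : IsOpen {Y : Fin (n - 1) → ℝ | ∑ j, (Y j) ^ 2 < 1} :=
    isOpen_lt (by fun_prop) continuous_const
  have hu₁ : ∀ᶠ Z in 𝓝 Y, DifferentiableAt ℝ u Z :=
    eventually_of_mem (hball.mem_nhds hY) fun Z hZ =>
      (hu.contDiffAt (hball.mem_nhds hZ)).differentiableAt (by simp)
  have hu₂ := (hu.contDiffAt (hball.mem_nhds hY)).differentiableAt_pd (WithTop.coe_le_coe.2 le_top)
  have hφ : ∀ᶠ t in 𝓝 (∑ i, Y i ^ 2),
      HasDerivAt (fun t : ℝ => ((1 - t : ℝ) : ℂ) ^ s * Real.log (1 - t))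
        (-(((1 - t : ℝ) : ℂ) ^ (s - 1) * (s * Real.log (1 - t) + 1))) t :=
    (eventually_lt_nhds hY₁).mono fun t ht => by
      simpa using hasDerivAt_ofReal_one_sub_cpow_mul_log s 1 0 ht
  have hφ' := (hasDerivAt_ofReal_one_sub_cpow_mul_log (s - 1) s 1 hY₁).fun_neg
  change Pop n lam σ (fun Z =>
    (fun t : ℝ => ((1 - t : ℝ) : ℂ) ^ s * Real.log (1 - t)) (∑ i, Z i ^ 2) * u Z) Y = _
  have hEu := differentiableAt_euler hu₂
  rw [Pop_comp_sum_sq_mul lam σ hφ hφ' hu₁ hu₂,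
    Pop_eq_of_differentiableAt lam σ hu₁.self_of_nhds hEu,
    Pop_eq_of_differentiableAt lam (σ - 2 * s) hu₁.self_of_nhds hEu]
  have hw : ((1 - ∑ i, Y i ^ 2 : ℝ) : ℂ) ≠ 0 := by exact_mod_cast (sub_pos.2 hY₁).ne'
  simp only [Complex.cpow_sub _ _ hw, Complex.cpow_one]
  push_cast [Nat.cast_sub (by omega : 1 ≤ n)] at hw ⊢
  field_simp
  ring
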